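/- arXiv:math/0607247 — 4 statements merged into one kernel-verified Lean document; each statement's English description precedes it below -/
import Mathlib

section
/- Let p = 5 or p = 7 and let k ≥ 4 be an even integer. For every θ with 0 < θ < π, the complex number F*_{k,p,1}(θ) := e^{ikθ/2} · E*_{k,p}(e^{iθ}/√p) is real, i.e. its imaginary part is zero. -/
/-!
The reindexings `(c, d) ↦ (-c, d)` and `(c, d) ↦ (-d, c)` of the coprime pairs give
`conj (E_k z) = E_k (-z̄)` and `E_k (-1/z) = z^k E_k z`. Hence `conj (E*_{k,p} z) = E*_{k,p} (-z̄)`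
and, for even `k`, `E*_{k,p} (-1/(pz)) = p^{k/2} z^k E*_{k,p} z`. On the arc `z = e^{iθ}/√p` one
has `-z̄ = -1/(pz)` and `p^{k/2} z^k = e^{ikθ}`, so `conj (E*_{k,p} z) = e^{ikθ} E*_{k,p} z`, which
says that `e^{ikθ/2} E*_{k,p} z` is real.
-/

open Complex

/-- The weight-`k` Eisenstein series for `SL₂(ℤ)`:
`E_k(z) = (1/2) ∑_{(c,d) coprime} (cz+d)^{-k}`. -/
noncomputable def Ek (k : ℕ) (z : ℂ) : ℂ :=
  (1 / 2) * ∑' q : {q : ℤ × ℤ // Int.gcd q.1 q.2 = 1},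
    (((q : ℤ × ℤ).1 : ℂ) * z + ((q : ℤ × ℤ).2 : ℂ)) ^ (-(k : ℤ))

/-- The Eisenstein series associated with the Fricke group `Γ₀*(p)`:
`E*_{k,p}(z) = (p^{k/2} E_k(pz) + E_k(z)) / (p^{k/2} + 1)`. -/
noncomputable def EkStar (k p : ℕ) (z : ℂ) : ℂ :=
  ((p : ℂ) ^ (k / 2) * Ek k ((p : ℂ) * z) + Ek k z) / ((p : ℂ) ^ (k / 2) + 1)

open ComplexConjugate

def coprimePairNegFst : {q : ℤ × ℤ // Int.gcd q.1 q.2 = 1} ≃ {q : ℤ × ℤ // Int.gcd q.1 q.2 = 1} :=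
  ((Equiv.neg ℤ).prodCongr (Equiv.refl ℤ)).subtypeEquiv fun _ => by simp

def coprimePairRotate : {q : ℤ × ℤ // Int.gcd q.1 q.2 = 1} ≃ {q : ℤ × ℤ // Int.gcd q.1 q.2 = 1} :=
  ((Equiv.prodComm ℤ ℤ).trans ((Equiv.neg ℤ).prodCongr (Equiv.refl ℤ))).subtypeEquiv
    fun _ => by simp [Int.gcd_comm]

lemma Ek_conj (k : ℕ) (z : ℂ) : conj (Ek k z) = Ek k (-conj z) := by
  unfold Ek
  rw [← coprimePairNegFst.tsum_eq, map_mul, conj_tsum]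
  simp [coprimePairNegFst, map_ofNat]

lemma Ek_neg_inv (k : ℕ) {z : ℂ} (hz : z ≠ 0) : Ek k (-1 / z) = z ^ k * Ek k z := by
  unfold Ek
  rw [mul_left_comm (z ^ k), ← tsum_mul_left (a := z ^ k), ← coprimePairRotate.tsum_eq]
  congr 1
  refine tsum_congr fun ⟨(c, d), _⟩ => ?_
  have h : ((-d : ℤ) : ℂ) * (-1 / z) + c = (c * z + d) / z := by
    field_simp; push_cast; ring
  simp only [coprimePairRotate, Equiv.subtypeEquiv_apply, Equiv.trans_apply, Equiv.prodComm_apply,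
    Prod.swap_prod_mk, Equiv.prodCongr_apply, Prod.map, Equiv.refl_apply, Equiv.neg_apply, h]
  rw [div_zpow, zpow_neg, zpow_neg, div_inv_eq_mul, zpow_natCast, zpow_natCast, mul_comm]

lemma EkStar_conj (k p : ℕ) (z : ℂ) : conj (EkStar k p z) = EkStar k p (-conj z) := by
  simp [EkStar, Ek_conj, mul_neg]

lemma EkStar_neg_inv_mul {k : ℕ} (hk : Even k) {p : ℕ} (hp : p ≠ 0) {z : ℂ} (hz : z ≠ 0) :
    EkStar k p (-1 / (p * z)) = p ^ (k / 2) * z ^ k * EkStar k p z := by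
  obtain ⟨m, rfl⟩ := hk
  have hpz : (p : ℂ) * z ≠ 0 := mul_ne_zero (Nat.cast_ne_zero.mpr hp) hz
  have h : (p : ℂ) * (-1 / (p * z)) = -1 / z := by field_simp
  simp only [EkStar, h, Ek_neg_inv _ hz, Ek_neg_inv _ hpz, show (m + m) / 2 = m by omega]
  ring

lemma neg_conj_exp_mul_I_div_sqrt {r : ℝ} (hr : 0 < r) (θ : ℝ) :
    -conj (exp (I * θ) / √r) = -1 / (r * (exp (I * θ) / √r)) := by
  have hs : (√r : ℂ) ^ 2 = r := by rw [← ofReal_pow, Real.sq_sqrt hr.le]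
  have hs0 : (√r : ℂ) ≠ 0 := ofReal_ne_zero.mpr (Real.sqrt_pos.mpr hr).ne'
  rw [map_div₀, conj_ofReal, ← exp_conj, map_mul, conj_I, conj_ofReal, neg_mul, exp_neg, ← hs]
  field_simp

lemma ofReal_pow_div_two_mul_exp_div_sqrt_pow {r : ℝ} (hr : 0 < r) {k : ℕ} (hk : Even k) (θ : ℝ) :
    (r : ℂ) ^ (k / 2) * (exp (I * θ) / √r) ^ k = exp (I * θ) ^ k := by
  obtain ⟨m, rfl⟩ := hk
  have hs : (√r : ℂ) ^ 2 = r := by rw [← ofReal_pow, Real.sq_sqrt hr.le]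
  have hs0 : (√r : ℂ) ≠ 0 := ofReal_ne_zero.mpr (Real.sqrt_pos.mpr hr).ne'
  rw [show (m + m) / 2 = m by omega, ← hs, ← pow_mul, ← two_mul, div_pow]
  field_simp

lemma conj_exp_mul_exp_pow (k : ℕ) (θ : ℝ) :
    conj (exp (I * k * θ / 2)) * exp (I * θ) ^ k = exp (I * k * θ / 2) := by
  rw [← exp_conj, ← exp_nat_mul, ← exp_add]
  congr 1
  simp only [map_div₀, map_mul, conj_I, map_natCast, neg_mul, conj_ofReal, map_ofNat]
  ring

theorem stmt0_general (p : ℕ) (hp : p = 5 ∨ p = 7) (k : ℕ) (hke : Even k)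
    (θ : ℝ) :
    (Complex.exp (I * k * θ / 2) *
      EkStar k p (Complex.exp (I * θ) / (Real.sqrt p : ℂ))).im = 0 := by
  have hp0 : p ≠ 0 := by omega
  have hpr : (0 : ℝ) < p := by positivity
  have hz : exp (I * θ) / (√p : ℂ) ≠ 0 :=
    div_ne_zero (exp_ne_zero _) (ofReal_ne_zero.mpr (Real.sqrt_pos.mpr hpr).ne')
  apply conj_eq_iff_im.mp
  have hcirc := neg_conj_exp_mul_I_div_sqrt hpr θ
  have hfac := ofReal_pow_div_two_mul_exp_div_sqrt_pow hpr hke θ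
  rw [ofReal_natCast] at hcirc hfac
  rw [map_mul, EkStar_conj, hcirc, EkStar_neg_inv_mul hke hp0 hz, hfac, ← mul_assoc,
    conj_exp_mul_exp_pow]

theorem stmt0 (p : ℕ) (hp : p = 5 ∨ p = 7) (k : ℕ) (hk : 4 ≤ k) (hke : Even k)
    (θ : ℝ) (hθ1 : 0 < θ) (hθ2 : θ < Real.pi) :
    (Complex.exp (I * k * θ / 2) *
      EkStar k p (Complex.exp (I * θ) / (Real.sqrt p : ℂ))).im = 0 :=
  stmt0_general p hp k hke θ
end

section
/- Let p be a prime and let k ≥ 4 be an even integer. For every z in the upper half-plane ℍ, E*_{k,p}(z) = (1/2)·Σ_{(c,d)∈ℤ², gcd(c,d)=1, p ∣ c} (cz+d)^{−k} + (p^{k/2}/2)·Σ_{(c,d)∈ℤ², gcd(c,d)=1, p ∣ d} (c·(pz)+d)^{−k}; that is, E*_{k,p} coincides with the Eisenstein series of the Fricke group Γ₀*(p) attached to the cusp ∞. -/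
open Complex

/-!
Split the sums defining `E_k(z)` and `E_k(pz)` according to whether `p ∣ c`, resp. `p ∣ d`.
The substitutions `(c, d) ↦ (c, pd)` and `(c, d) ↦ (pc, d)` turn the complementary halves into
the two sums `A`, `B` of the theorem: `2 E_k(z) = A + p^k B` and `2 E_k(pz) = B + A`.
With `P = p^{k/2}`, so that `p^k = P²`, the average `(P (A + B) + A + P² B) / (P + 1)` is `A + P B`.
-/

section TsumSplit

variable {α β : Type*} [AddCommGroup α] [UniformSpace α] [IsUniformAddGroup α]
  [CompleteSpace α] [T2Space α]

theorem Summable.tsum_subtype_eq_add_tsum_subtype_and_not {f : β → α} (hf : Summable f)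
    (P Q : β → Prop) :
    ∑' x : {b // P b}, f x =
      ∑' x : {b // P b ∧ Q b}, f x + ∑' x : {b // P b ∧ ¬Q b}, f x := by
  have hunion : {b | P b ∧ Q b} ∪ {b | P b ∧ ¬Q b} = {b | P b} := by
    ext b; by_cases h : Q b <;> simp [h]
  have hdisj : Disjoint {b | P b ∧ Q b} {b | P b ∧ ¬Q b} :=
    Set.disjoint_left.2 fun _ h h' ↦ h'.2 h.2
  have := Summable.tsum_union_disjoint (f := f) hdisj (hf.subtype _) (hf.subtype _)
  rw [hunion] at this
  exact this

end TsumSplit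

section CoprimePairs

variable {p : ℤ}

theorem Int.gcd_mul_left_eq_one_iff (hp : Prime p) {c d : ℤ} :
    Int.gcd (p * c) d = 1 ↔ Int.gcd c d = 1 ∧ ¬p ∣ d := by
  simp only [← Int.isCoprime_iff_gcd_eq_one, IsCoprime.mul_left_iff, hp.coprime_iff_not_dvd,
    and_comm]

theorem Int.gcd_mul_right_eq_one_iff (hp : Prime p) {c d : ℤ} :
    Int.gcd c (p * d) = 1 ↔ Int.gcd c d = 1 ∧ ¬p ∣ c := by
  rw [Int.gcd_comm, Int.gcd_mul_left_eq_one_iff hp, Int.gcd_comm]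

def coprimeMulFstEquiv (hp : Prime p) :
    {q : ℤ × ℤ // Int.gcd q.1 q.2 = 1 ∧ ¬p ∣ q.2} ≃
      {q : ℤ × ℤ // Int.gcd q.1 q.2 = 1 ∧ p ∣ q.1} where
  toFun q := ⟨(p * q.1.1, q.1.2), (Int.gcd_mul_left_eq_one_iff hp).2 q.2, dvd_mul_right _ _⟩
  invFun q := ⟨(q.1.1 / p, q.1.2),
    (Int.gcd_mul_left_eq_one_iff hp).1 (by rw [Int.mul_ediv_cancel' q.2.2]; exact q.2.1)⟩
  left_inv q := by ext <;> simp [Int.mul_ediv_cancel_left _ hp.ne_zero]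
  right_inv q := by ext <;> simp [Int.mul_ediv_cancel' q.2.2]

def coprimeMulSndEquiv (hp : Prime p) :
    {q : ℤ × ℤ // Int.gcd q.1 q.2 = 1 ∧ ¬p ∣ q.1} ≃
      {q : ℤ × ℤ // Int.gcd q.1 q.2 = 1 ∧ p ∣ q.2} where
  toFun q := ⟨(q.1.1, p * q.1.2), (Int.gcd_mul_right_eq_one_iff hp).2 q.2, dvd_mul_right _ _⟩
  invFun q := ⟨(q.1.1, q.1.2 / p),
    (Int.gcd_mul_right_eq_one_iff hp).1 (by rw [Int.mul_ediv_cancel' q.2.2]; exact q.2.1)⟩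
  left_inv q := by ext <;> simp [Int.mul_ediv_cancel_left _ hp.ne_zero]
  right_inv q := by ext <;> simp [Int.mul_ediv_cancel' q.2.2]

end CoprimePairs

noncomputable def eisensteinTerm (k : ℕ) (z : ℂ) (q : ℤ × ℤ) : ℂ :=
  ((q.1 : ℂ) * z + (q.2 : ℂ)) ^ (-(k : ℤ))

theorem summable_eisensteinTerm {k : ℕ} (hk : 3 ≤ k) {z : ℂ} (hz : 0 < z.im) :
    Summable (eisensteinTerm k z) :=
  (summable_prod_eisSummand hk ⟨z, hz⟩).congr fun q ↦ by
    simp [eisensteinTerm, EisensteinSeries.eisSummand]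

theorem eisensteinTerm_mul_fst (k : ℕ) (z : ℂ) (p c d : ℤ) :
    eisensteinTerm k z (p * c, d) = eisensteinTerm k (p * z) (c, d) := by
  simp only [eisensteinTerm, Int.cast_mul, mul_assoc, mul_left_comm (p : ℂ)]

theorem eisensteinTerm_mul_snd (k : ℕ) (z : ℂ) {p : ℤ} (hp : p ≠ 0) (c d : ℤ) :
    eisensteinTerm k z (c, d) = (p : ℂ) ^ k * eisensteinTerm k (p * z) (c, p * d) := by
  have hp' : (p : ℂ) ≠ 0 := Int.cast_ne_zero.2 hp
  have : (c : ℂ) * (p * z) + ((p * d : ℤ) : ℂ) = p * (c * z + d) := by push_cast; ring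
  rw [eisensteinTerm, eisensteinTerm, this, mul_zpow, ← mul_assoc, ← zpow_natCast,
    ← zpow_add₀ hp', add_neg_cancel, zpow_zero, one_mul]

section SplitEisenstein

variable {p : ℤ} {k : ℕ} {z : ℂ}

theorem Ek_eq_tsum_dvd_fst_add_tsum_dvd_snd (hp : Prime p)
    (hs : Summable (eisensteinTerm k z)) :
    Ek k z = 1 / 2 * (∑' q : {q : ℤ × ℤ // Int.gcd q.1 q.2 = 1 ∧ p ∣ q.1},
        eisensteinTerm k z q +
      (p : ℂ) ^ k * ∑' q : {q : ℤ × ℤ // Int.gcd q.1 q.2 = 1 ∧ p ∣ q.2},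
        eisensteinTerm k (p * z) q) := by
  have hnot :
      ∑' q : {q : ℤ × ℤ // Int.gcd q.1 q.2 = 1 ∧ ¬p ∣ q.1}, eisensteinTerm k z q =
      (p : ℂ) ^ k * ∑' q : {q : ℤ × ℤ // Int.gcd q.1 q.2 = 1 ∧ p ∣ q.2},
        eisensteinTerm k (p * z) q := by
    rw [← (coprimeMulSndEquiv hp).tsum_eq, ← tsum_mul_left]
    exact tsum_congr fun q ↦ eisensteinTerm_mul_snd k z hp.ne_zero _ _
  rw [Ek, ← hnot]
  exact congrArg _ (hs.tsum_subtype_eq_add_tsum_subtype_and_not _ _)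

theorem Ek_mul_eq_tsum_dvd_snd_add_tsum_dvd_fst (hp : Prime p)
    (hs : Summable (eisensteinTerm k (p * z))) :
    Ek k (p * z) = 1 / 2 * (∑' q : {q : ℤ × ℤ // Int.gcd q.1 q.2 = 1 ∧ p ∣ q.2},
        eisensteinTerm k (p * z) q +
      ∑' q : {q : ℤ × ℤ // Int.gcd q.1 q.2 = 1 ∧ p ∣ q.1}, eisensteinTerm k z q) := by
  have hnot :
      ∑' q : {q : ℤ × ℤ // Int.gcd q.1 q.2 = 1 ∧ ¬p ∣ q.2}, eisensteinTerm k (p * z) q =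
      ∑' q : {q : ℤ × ℤ // Int.gcd q.1 q.2 = 1 ∧ p ∣ q.1}, eisensteinTerm k z q := by
    rw [← (coprimeMulFstEquiv hp).tsum_eq]
    exact tsum_congr fun q ↦ (eisensteinTerm_mul_fst k z p _ _).symm
  rw [Ek, ← hnot]
  exact congrArg _ (hs.tsum_subtype_eq_add_tsum_subtype_and_not _ _)

end SplitEisenstein

theorem stmt2 (p : ℕ) (hp : p.Prime) (k : ℕ) (hk : 4 ≤ k) (hke : Even k)
    (z : ℂ) (hz : 0 < z.im) :
    EkStar k p z =
      (1 / 2) * ∑' q : {q : ℤ × ℤ // Int.gcd q.1 q.2 = 1 ∧ (p : ℤ) ∣ q.1},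
        (((q : ℤ × ℤ).1 : ℂ) * z + ((q : ℤ × ℤ).2 : ℂ)) ^ (-(k : ℤ)) +
      ((p : ℂ) ^ (k / 2) / 2) * ∑' q : {q : ℤ × ℤ // Int.gcd q.1 q.2 = 1 ∧ (p : ℤ) ∣ q.2},
        (((q : ℤ × ℤ).1 : ℂ) * ((p : ℂ) * z) + ((q : ℤ × ℤ).2 : ℂ)) ^ (-(k : ℤ)) := by
  have hpZ : Prime (p : ℤ) := Nat.prime_iff_prime_int.mp hp
  have hpz : 0 < (((p : ℤ) : ℂ) * z).im := by simpa using mul_pos (Nat.cast_pos.2 hp.pos) hz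
  have hk3 : 3 ≤ k := by omega
  have hEz := Ek_eq_tsum_dvd_fst_add_tsum_dvd_snd hpZ (summable_eisensteinTerm hk3 hz)
  have hEpz := Ek_mul_eq_tsum_dvd_snd_add_tsum_dvd_fst hpZ (summable_eisensteinTerm hk3 hpz)
  simp only [Int.cast_natCast] at hEz hEpz
  have hpk : (p : ℂ) ^ k = ((p : ℂ) ^ (k / 2)) ^ 2 := by
    rw [← pow_mul, Nat.div_two_mul_two_of_even hke]
  have hP : (p : ℂ) ^ (k / 2) + 1 ≠ 0 := by exact_mod_cast Nat.succ_ne_zero (p ^ (k / 2))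
  have average : ∀ A B : ℂ, ((p : ℂ) ^ (k / 2) * (1 / 2 * (B + A)) +
      1 / 2 * (A + ((p : ℂ) ^ (k / 2)) ^ 2 * B)) / ((p : ℂ) ^ (k / 2) + 1) =
      1 / 2 * A + (p : ℂ) ^ (k / 2) / 2 * B := by
    intro A B
    field_simp
    ring
  rw [EkStar, hEz, hEpz, hpk]
  exact average _ _
end

section
/- Let k be an even integer and let f : ℍ → ℂ be a function on the upper half-plane satisfying, for all z ∈ ℍ: f(−1/(7z)) = (√7·z)^k · f(z), f(z+1) = f(z), and f((−3z−1)/(7z+2)) = (7z+2)^k · f(z). If k ≡ 2 (mod 4), then f(i/√7) = 0 and f(−1/2 + i/(2√7)) = 0. If k is not divisible by 6, then f(−5/14 + (√3/14)·i) = 0. -/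
open Complex

set_option maxHeartbeats 2000000 in
theorem stmt4 (k : ℤ) (hke : Even k) (f : ℂ → ℂ)
    (h1 : ∀ z : ℂ, 0 < z.im → f (-1 / (7 * z)) = ((Real.sqrt 7 : ℂ) * z) ^ k * f z)
    (h2 : ∀ z : ℂ, 0 < z.im → f (z + 1) = f z)
    (h3 : ∀ z : ℂ, 0 < z.im → f ((-3 * z - 1) / (7 * z + 2)) = (7 * z + 2) ^ k * f z) :
    (k % 4 = 2 → f (I / Real.sqrt 7) = 0 ∧ f (-1/2 + I / (2 * Real.sqrt 7)) = 0) ∧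
    (¬ (6 ∣ k) → f (-5/14 + ((Real.sqrt 3 : ℂ) / 14) * I) = 0) := by
  set s : ℝ := Real.sqrt 7 with hsdef
  have hs0 : 0 < s := Real.sqrt_pos.mpr (by norm_num)
  have hs : s ^ 2 = 7 := Real.sq_sqrt (by norm_num)
  have h0 : s ≠ 0 := hs0.ne'
  have h0c : (s : ℂ) ≠ 0 := by exact_mod_cast h0
  constructor
  · intro hk4
    -- I ^ k = -1
    have hIk : (I : ℂ) ^ k = -1 := by
      obtain ⟨q, hq⟩ : ∃ q, k = 4 * q + 2 := ⟨k / 4, by omega⟩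
      rw [hq, zpow_add₀ I_ne_zero, zpow_mul]
      have h4 : (I : ℂ) ^ (4 : ℤ) = 1 := by
        rw [show (4:ℤ) = ((4:ℕ):ℤ) from rfl, zpow_natCast]; simp [pow_succ]
      have h2' : (I : ℂ) ^ (2 : ℤ) = -1 := by
        rw [show (2:ℤ) = ((2:ℕ):ℤ) from rfl, zpow_natCast]; simp [pow_succ]
      rw [h4, one_zpow, h2', one_mul]
    constructor
    · -- z₀ = I / s
      have him₀ : 0 < ((I : ℂ) / s).im := by
        simp [div_im, h0]
        positivity
      have hfix : (-1 : ℂ) / (7 * (I / s)) = I / s := by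
        apply Complex.ext <;>
          simp [div_re, div_im, normSq_apply, h0] <;>
          field_simp <;> nlinarith [hs, hs0]
      have hfac : (s : ℂ) * (I / s) = I := by field_simp
      have key := h1 (I / s) him₀
      rw [hfix, hfac, hIk] at key
      linear_combination key / 2
    · -- z₁ = -1/2 + I/(2s)
      set z₁ : ℂ := -1/2 + I / (2 * s) with hz₁
      set w : ℂ := 1/2 + I / (2 * s) with hw
      set u : ℂ := -1/4 + (s : ℂ)/28 * I with hudef
      have him₁ : 0 < z₁.im := by
        rw [hz₁]; simp [div_im, h0]; positivity
      have himw : 0 < w.im := by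
        rw [hw]; simp [div_im, h0]; positivity
      have himu : 0 < u.im := by
        rw [hudef]; simp [div_im, h0]; positivity
      have hz1w : z₁ + 1 = w := by rw [hz₁, hw]; ring
      have hu : (-1 : ℂ) / (7 * w) = u := by
        rw [hw, hudef]
        apply Complex.ext <;>
          simp [div_re, div_im, normSq_apply, h0] <;>
          field_simp <;> nlinarith [hs, hs0]
      have hmob : (-3 * u - 1) / (7 * u + 2) = z₁ := by
        rw [hudef, hz₁]
        apply Complex.ext <;>
          simp [div_re, div_im, normSq_apply, h0] <;>
          field_simp <;> nlinarith [hs, hs0]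
      have hfac : (7 * u + 2) * ((s : ℂ) * w) = I := by
        rw [hudef, hw]
        apply Complex.ext <;>
          simp [div_re, div_im, normSq_apply, mul_re, mul_im, h0] <;>
          field_simp <;> nlinarith [hs, hs0]
      have e2 : f w = f z₁ := by rw [← hz1w]; exact h2 z₁ him₁
      have e1 := h1 w himw
      rw [hu] at e1
      have e3 := h3 u himu
      rw [hmob] at e3
      have key : f z₁ = ((7 * u + 2) * ((s : ℂ) * w)) ^ k * f z₁ := by
        rw [mul_zpow]
        calc f z₁ = (7*u+2)^k * f u := e3
        _ = (7*u+2)^k * (((s:ℂ)*w)^k * f w) := by rw [e1]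
        _ = (7*u+2)^k * ((s:ℂ)*w)^k * f z₁ := by rw [e2]; ring
      rw [hfac, hIk] at key
      linear_combination key / 2
  · intro h6
    set t : ℝ := Real.sqrt 3 with htdef
    have ht0 : 0 < t := Real.sqrt_pos.mpr (by norm_num)
    have ht : t ^ 2 = 3 := Real.sq_sqrt (by norm_num)
    have htne : t ≠ 0 := ht0.ne'
    set z₂ : ℂ := -5/14 + ((t : ℂ) / 14) * I with hz₂
    set ω : ℂ := -1/2 + ((t : ℂ)/2) * I with hω
    have him₂ : 0 < z₂.im := by
      rw [hz₂]; simp [div_im, htne]; positivity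
    have hc3 : ((t : ℝ) : ℂ) ^ 2 = 3 := by rw [← Complex.ofReal_pow, ht]; norm_num
    have hmob : (-3 * z₂ - 1) / (7 * z₂ + 2) = z₂ := by
      rw [hz₂]
      have hden : (7 * ((-5/14 : ℂ) + (t:ℂ)/14 * I) + 2) ≠ 0 := by
        intro h
        have := congrArg Complex.im h
        simp [htne] at this
      rw [div_eq_iff hden]
      linear_combination (1/28) * hc3 - (((t:ℂ))^2/28) * I_sq
    have hωeq : 7 * z₂ + 2 = ω := by rw [hz₂, hω]; ring
    have hω0 : ω ≠ 0 := by
      rw [hω]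
      intro h
      have := congrArg Complex.im h
      simp [htne] at this
    have hω3 : ω ^ (3 : ℤ) = 1 := by
      rw [show (3:ℤ) = ((3:ℕ):ℤ) from rfl, zpow_natCast, hω]
      apply Complex.ext <;>
        simp [pow_succ, mul_re, mul_im] <;> nlinarith [ht, ht0]
    have hr : k % 3 = 1 ∨ k % 3 = 2 := by
      obtain ⟨m, hm⟩ := hke
      omega
    have hωk : ω ^ k = ω ^ (k % 3) := by
      conv_lhs => rw [show k = 3 * (k / 3) + k % 3 by omega]
      rw [zpow_add₀ hω0, zpow_mul, hω3, one_zpow, one_mul]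
    have hωne : ω ^ k ≠ 1 := by
      have hωne1 : ω ≠ 1 := by
        rw [hω]
        intro h
        have := congrArg Complex.re h
        norm_num at this
      have hω2ne : ω ^ (2:ℤ) ≠ 1 := by
        intro h
        apply hωne1
        have : ω ^ (3:ℤ) = ω ^ (2:ℤ) * ω := by
          rw [show (3:ℤ) = 2 + 1 by rfl, zpow_add₀ hω0, zpow_one]
        rw [hω3, h, one_mul] at this
        exact this.symm
      rw [hωk]
      rcases hr with h | h <;> rw [h]
      · simpa using hωne1
      · exact hω2ne
    have key := h3 z₂ him₂
    rw [hmob, hωeq] at key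
    have hz : (ω ^ k - 1) * f z₂ = 0 := by linear_combination -key
    rcases mul_eq_zero.mp hz with h | h
    · exact absurd (by linear_combination h) hωne
    · exact h
end

section
/- Let k ≥ 4 be an even integer and let α₅ := arctan 2. If 4 ∣ k, then e^{ik(π/2+α₅)/2}·E*_{k,5}(−2/5 + i/5) = (2·5^{k/2}/(5^{k/2}+1))·cos(k(π/2+α₅)/2)·E_k(i), and moreover E_k(i) is a positive real number. If k ≡ 2 (mod 4), then E*_{k,5}(−2/5 + i/5) = 0. -/
open Complex

open ComplexConjugate

/-!
Write `ρ = -2/5 + i/5 = -1/(2 + i)`. The transformations `z ↦ z + b` and `z ↦ -1/z` give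
`E_k(5ρ) = E_k(i - 2) = E_k(i)` and `E_k(ρ) = (2 + i)^k E_k(i)`, so `E*_{k,5}(ρ)` is
`(5^{k/2} + (2 + i)^k) / (5^{k/2} + 1)` times `E_k(i)`. With `θ = π/2 + arctan 2` one has
`(2 + i)² e^{2iθ} = 5`, which turns `e^{ikθ/2} (5^{k/2} + (2 + i)^k)` into `2·5^{k/2} cos(kθ/2)`.

It remains to understand `E_k(i)`. From `-1/i = i` we get `E_k(i) = i^k E_k(i)`, so `E_k(i) = 0`
when `k ≡ 2 mod 4`. Negating `c` in the pairs `(c, d)` shows `E_k(-z̄) = conj E_k(z)`, so `E_k(i)`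
is real. When `4 ∣ k`, the four pairs `(±1, 0)`, `(0, ±1)` each contribute `1` to the sum, and every
other coprime pair has `c d ≠ 0`, so its term has norm at most `((c² + d²)²)⁻¹ ≤ (4c²d²)⁻¹`; these
bounds add up to `(π²/3)²/4 < 4`, hence `Re E_k(i) > 0`.
-/

-- The `n = 0` term is `1 / 0 = 0`.
lemma hasSum_int_one_div_sq : HasSum (fun n : ℤ => 1 / (n : ℝ) ^ 2) (Real.pi ^ 2 / 3) := by
  have h := HasSum.of_nat_of_neg (f := fun n : ℤ => 1 / (n : ℝ) ^ 2)
    (by simpa using hasSum_zeta_two) (by simpa using hasSum_zeta_two)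
  rw [Int.cast_zero, zero_pow two_ne_zero, div_zero, sub_zero] at h
  rwa [show Real.pi ^ 2 / 3 = Real.pi ^ 2 / 6 + Real.pi ^ 2 / 6 by ring]

lemma norm_tsum_sub_sum_le {α E : Type*} [NormedAddCommGroup E] [CompleteSpace E] {f : α → E}
    {G : α → ℝ} (s : Finset α) (hG : Summable G) (hG0 : 0 ≤ G) (hfG : ∀ a ∉ s, ‖f a‖ ≤ G a) :
    ‖∑' a, f a - ∑ a ∈ s, f a‖ ≤ ∑' a, G a := by
  have hnorm : Summable fun a : ((s : Set α)ᶜ : Set α) => ‖f a‖ :=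
    (hG.subtype _).of_nonneg_of_le (fun _ => norm_nonneg _) fun a => hfG a a.2
  have hf : Summable f := Summable.of_norm_bounded_eventually hG <|
    Filter.eventually_cofinite.2 <| s.finite_toSet.subset fun a ha => by
      by_contra h
      exact ha (hfG a h)
  rw [← hf.sum_add_tsum_compl (s := s), add_sub_cancel_left]
  calc ‖∑' a : ((s : Set α)ᶜ : Set α), f a‖
      ≤ ∑' a : ((s : Set α)ᶜ : Set α), ‖f a‖ := norm_tsum_le_tsum_norm hnorm
    _ ≤ ∑' a : ((s : Set α)ᶜ : Set α), G a :=
      hnorm.tsum_le_tsum (fun a => hfG a a.2) (hG.subtype _)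
    _ ≤ ∑' a, G a := tsum_comp_le_tsum_of_inj hG hG0 Subtype.val_injective

lemma two_add_I_sq_mul_exp_sq :
    (2 + I) ^ 2 * exp (((Real.pi / 2 + Real.arctan 2 : ℝ) : ℂ) * I) ^ 2 = 5 := by
  have h5 : ((√5 : ℝ) : ℂ) ^ 2 = 5 := by
    rw [← ofReal_pow, Real.sq_sqrt (by norm_num)]
    norm_num
  have hexp : exp (((Real.pi / 2 + Real.arctan 2 : ℝ) : ℂ) * I) = (I - 2) / (√5 : ℝ) := by
    rw [exp_mul_I, ← ofReal_cos, ← ofReal_sin, add_comm (Real.pi / 2), Real.cos_add_pi_div_two,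
      Real.sin_add_pi_div_two, Real.sin_arctan, Real.cos_arctan,
      show (1 : ℝ) + 2 ^ 2 = 5 by norm_num]
    push_cast
    ring
  rw [hexp, div_pow, h5, ← mul_div_assoc, ← mul_pow,
    show (2 + I) * (I - 2) = -5 by linear_combination I_sq]
  norm_num

lemma exp_mul_pow_add_pow_of_sq_mul_exp_sq {a z : ℂ} {θ : ℝ} (hz : z ^ 2 * exp (θ * I) ^ 2 = a)
    {k : ℕ} (hk : Even k) :
    exp (I * k * θ / 2) * (a ^ (k / 2) + z ^ k) = 2 * a ^ (k / 2) * (Real.cos (k * θ / 2) : ℂ) := by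
  obtain ⟨m, rfl⟩ := hk
  have hw : exp (I * ↑(m + m) * θ / 2) = exp (θ * I) ^ m := by
    rw [← exp_nat_mul]
    congr 1
    push_cast
    ring
  have hcos : 2 * (Real.cos ((m + m : ℕ) * θ / 2) : ℂ) = exp (θ * I) ^ m + (exp (θ * I) ^ m)⁻¹ := by
    rw [ofReal_cos, two_cos, ← exp_nat_mul, ← exp_neg]
    congr 2 <;> push_cast <;> ring
  have hpow : z ^ (m + m) * (exp (θ * I) ^ m) ^ 2 = a ^ m := by
    rw [← hz]
    ring
  rw [hw, show (m + m) / 2 = m by omega, mul_right_comm, hcos]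
  field_simp [exp_ne_zero]
  linear_combination hpow

abbrev CoprimePair := {q : ℤ × ℤ // Int.gcd q.1 q.2 = 1}

noncomputable def eisTerm (k : ℕ) (z : ℂ) (q : ℤ × ℤ) : ℂ := ((q.1 : ℂ) * z + q.2) ^ (-(k : ℤ))

lemma Ek_eq_tsum_eisTerm (k : ℕ) (z : ℂ) : Ek k z = 1 / 2 * ∑' q : CoprimePair, eisTerm k z q :=
  rfl

namespace CoprimePair

def shear (b : ℤ) : CoprimePair ≃ CoprimePair :=
  (Equiv.prodShear (Equiv.refl ℤ) fun m => Equiv.addRight (b * m)).subtypeEquiv fun p => by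
    simp

def rotate : CoprimePair ≃ CoprimePair :=
  ((Equiv.prodComm ℤ ℤ).trans ((Equiv.refl ℤ).prodCongr (Equiv.neg ℤ))).subtypeEquiv fun p => by
    simp [Int.gcd_comm]

def negFst : CoprimePair ≃ CoprimePair :=
  ((Equiv.neg ℤ).prodCongr (Equiv.refl ℤ)).subtypeEquiv fun p => by simp

end CoprimePair

lemma Ek_add_intCast (k : ℕ) (z : ℂ) (b : ℤ) : Ek k (z + b) = Ek k z := by
  rw [Ek_eq_tsum_eisTerm, Ek_eq_tsum_eisTerm,
    ← (CoprimePair.shear b).tsum_eq fun q => eisTerm k z q]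
  congr 2 with ⟨⟨m, n⟩, _⟩
  show ((m : ℂ) * (z + b) + n) ^ (-(k : ℤ)) = ((m : ℂ) * z + ((n + b * m : ℤ) : ℂ)) ^ (-(k : ℤ))
  congr 1
  push_cast
  ring

lemma Ek_neg_conj (k : ℕ) (z : ℂ) : Ek k (-conj z) = conj (Ek k z) := by
  rw [Ek_eq_tsum_eisTerm, Ek_eq_tsum_eisTerm, ← CoprimePair.negFst.tsum_eq, map_mul, conj_tsum]
  congr 1
  · rw [map_div₀, map_one, map_ofNat]
  congr 1 with ⟨⟨m, n⟩, _⟩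
  simp [eisTerm, CoprimePair.negFst]

lemma Ek_I_eq_I_pow_mul (k : ℕ) : Ek k I = I ^ k * Ek k I := by
  simpa using Ek_neg_inv k I_ne_zero

lemma Ek_I_eq_zero {k : ℕ} (hk : k % 4 = 2) : Ek k I = 0 := by
  have hI : I ^ k = -1 := by
    rw [← Nat.div_add_mod k 4, hk, pow_add, pow_mul]
    norm_num
  have h := Ek_I_eq_I_pow_mul k
  rw [hI] at h
  linear_combination h / 2

lemma Ek_I_im_eq_zero (k : ℕ) : (Ek k I).im = 0 := by
  have h := Ek_neg_conj k I
  rw [conj_I, neg_neg] at h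
  exact conj_eq_iff_im.1 h.symm

lemma Ek_rho_five_two (k : ℕ) : Ek k (-2 / 5 + I / 5) = (2 + I) ^ k * Ek k I := by
  have h0 : (2 + I : ℂ) ≠ 0 := fun h => by simpa using congrArg re h
  rw [show (-2 / 5 + I / 5 : ℂ) = -1 / (2 + I) by field_simp; linear_combination I_sq,
    Ek_neg_inv k h0, show (2 + I : ℂ) = I + ((2 : ℤ) : ℂ) by push_cast; ring, Ek_add_intCast]

lemma Ek_five_mul_rho_five_two (k : ℕ) : Ek k (5 * (-2 / 5 + I / 5)) = Ek k I := by
  rw [show (5 : ℂ) * (-2 / 5 + I / 5) = I + ((-2 : ℤ) : ℂ) by push_cast; ring, Ek_add_intCast]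

lemma EkStar_five_rho_five_two (k : ℕ) :
    EkStar k 5 (-2 / 5 + I / 5) =
      ((5 : ℂ) ^ (k / 2) + (2 + I) ^ k) / ((5 : ℂ) ^ (k / 2) + 1) * Ek k I := by
  rw [EkStar, Nat.cast_ofNat, Ek_five_mul_rho_five_two, Ek_rho_five_two]
  ring

lemma norm_eisTerm_I_le {k : ℕ} (hk : 4 ≤ k) {c d : ℤ} (hc : c ≠ 0) (hd : d ≠ 0) :
    ‖eisTerm k I (c, d)‖ ≤ 1 / (c : ℝ) ^ 2 * (1 / (d : ℝ) ^ 2) / 4 := by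
  have hsq : ‖(c : ℂ) * I + d‖ ^ 2 = (c : ℝ) ^ 2 + (d : ℝ) ^ 2 := by
    rw [Complex.sq_norm, show (c : ℂ) * I + d = (d : ℝ) + (c : ℝ) * I by push_cast; ring,
      normSq_add_mul_I]
    ring
  have hc1 : (1 : ℝ) ≤ (c : ℝ) ^ 2 :=
    (one_le_sq_iff_one_le_abs _).2 (by exact_mod_cast Int.one_le_abs hc)
  have hr : 1 ≤ ‖(c : ℂ) * I + d‖ := by nlinarith [norm_nonneg ((c : ℂ) * I + d), sq_nonneg (d : ℝ)]
  calc ‖eisTerm k I (c, d)‖ = (‖(c : ℂ) * I + d‖ ^ k)⁻¹ := by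
        simp [eisTerm]
    _ ≤ (‖(c : ℂ) * I + d‖ ^ 4)⁻¹ := inv_anti₀ (by positivity) (pow_le_pow_right₀ hr hk)
    _ = (((c : ℝ) ^ 2 + (d : ℝ) ^ 2) ^ 2)⁻¹ := by rw [← hsq, ← pow_mul]
    _ ≤ (4 * ((c : ℝ) ^ 2 * (d : ℝ) ^ 2))⁻¹ :=
        inv_anti₀ (by positivity) (by nlinarith [sq_nonneg ((c : ℝ) ^ 2 - (d : ℝ) ^ 2)])
    _ = 1 / (c : ℝ) ^ 2 * (1 / (d : ℝ) ^ 2) / 4 := by field_simp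

def axisPairs : Finset (ℤ × ℤ) := {(1, 0), (-1, 0), (0, 1), (0, -1)}

lemma ne_zero_of_gcd_eq_one_of_notMem_axisPairs {c d : ℤ} (h : Int.gcd c d = 1)
    (hcd : (c, d) ∉ axisPairs) : c ≠ 0 ∧ d ≠ 0 := by
  constructor <;> rintro rfl <;> simp [axisPairs] at h hcd <;> omega

lemma sum_axisPairs_eisTerm_I {k : ℕ} (hk : 4 ∣ k) : ∑ p ∈ axisPairs, eisTerm k I p = 4 := by
  obtain ⟨j, rfl⟩ := hk
  norm_num [axisPairs, eisTerm, zpow_mul]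

lemma Ek_I_re_pos {k : ℕ} (hk : 4 ≤ k) (h4 : 4 ∣ k) : 0 < (Ek k I).re := by
  set G : ℤ × ℤ → ℝ := fun p => 1 / (p.1 : ℝ) ^ 2 * (1 / (p.2 : ℝ) ^ 2) / 4
  have hG0 : 0 ≤ G := fun p => by positivity
  have hG : HasSum G ((Real.pi ^ 2 / 3) * (Real.pi ^ 2 / 3) / 4) :=
    (hasSum_int_one_div_sq.mul hasSum_int_one_div_sq
      (hasSum_int_one_div_sq.summable.mul_of_nonneg hasSum_int_one_div_sq.summable
        (fun _ => by positivity) fun _ => by positivity)).div_const 4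
  have haxis : ∑ q ∈ axisPairs.subtype (fun p => Int.gcd p.1 p.2 = 1), eisTerm k I q = 4 := by
    rw [Finset.sum_subtype_of_mem _ (by decide), sum_axisPairs_eisTerm_I h4]
  have htail : ‖∑' q : CoprimePair, eisTerm k I q - 4‖ ≤ ∑' p, G p := by
    rw [← haxis]
    refine (norm_tsum_sub_sum_le (G := fun q : CoprimePair => G q) _ (hG.summable.subtype _)
      (fun q => hG0 q) fun q hq => ?_).trans
      (tsum_comp_le_tsum_of_inj hG.summable hG0 Subtype.val_injective)
    obtain ⟨hc, hd⟩ := ne_zero_of_gcd_eq_one_of_notMem_axisPairs q.2 (by simpa using hq)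
    exact norm_eisTerm_I_le hk hc hd
  have hπ : ∑' p, G p < 4 := by
    have hπ2 : Real.pi ^ 2 < 10 := by nlinarith [Real.pi_lt_d2, Real.pi_pos]
    rw [hG.tsum_eq]
    nlinarith [mul_self_lt_mul_self (sq_nonneg _) hπ2]
  have hre := (abs_re_le_norm _).trans_lt (htail.trans_lt hπ)
  rw [sub_re, re_ofNat] at hre
  rw [Ek_eq_tsum_eisTerm, show (1 / 2 : ℂ) = ((1 / 2 : ℝ) : ℂ) by push_cast; rfl, re_ofReal_mul]
  linarith [(abs_lt.1 hre).1]

theorem stmt7_general (k : ℕ) (hk : 4 ≤ k) :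
    (4 ∣ k →
      Complex.exp (I * k * (Real.pi / 2 + Real.arctan 2) / 2) *
          EkStar k 5 (-2/5 + I / 5) =
        (2 * (5 : ℂ) ^ (k / 2) / ((5 : ℂ) ^ (k / 2) + 1)) *
          (Real.cos ((k : ℝ) * (Real.pi / 2 + Real.arctan 2) / 2) : ℂ) * Ek k I ∧
      (Ek k I).im = 0 ∧ 0 < (Ek k I).re) ∧
    (k % 4 = 2 → EkStar k 5 (-2/5 + I / 5) = 0) := by
  refine ⟨fun h4 => ⟨?_, Ek_I_im_eq_zero k, Ek_I_re_pos hk h4⟩, fun h2 => ?_⟩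
  · have hcos := exp_mul_pow_add_pow_of_sq_mul_exp_sq two_add_I_sq_mul_exp_sq
      (even_iff_two_dvd.2 ((by norm_num : 2 ∣ 4).trans h4))
    rw [ofReal_add, ofReal_div, ofReal_ofNat] at hcos
    rw [EkStar_five_rho_five_two, ← mul_assoc, mul_div_assoc', hcos]
    ring
  · rw [EkStar_five_rho_five_two, Ek_I_eq_zero h2, mul_zero]

theorem stmt7 (k : ℕ) (hk : 4 ≤ k) (hke : Even k) :
    (4 ∣ k →
      Complex.exp (I * k * (Real.pi / 2 + Real.arctan 2) / 2) *
          EkStar k 5 (-2/5 + I / 5) =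
        (2 * (5 : ℂ) ^ (k / 2) / ((5 : ℂ) ^ (k / 2) + 1)) *
          (Real.cos ((k : ℝ) * (Real.pi / 2 + Real.arctan 2) / 2) : ℂ) * Ek k I ∧
      (Ek k I).im = 0 ∧ 0 < (Ek k I).re) ∧
    (k % 4 = 2 → EkStar k 5 (-2/5 + I / 5) = 0) :=
  stmt7_general k hk
end
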